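/- arXiv:1506.04688 — 9 statements merged into one kernel-verified Lean document; each statement's English description precedes it below -/
import Mathlib

section
/- Let u be a vertex with d_u + 1 distinct local eigenvalues and let π(u) = {U_0,...,U_r} be a walk-regular partition around u. Then r ≥ d_u. -/
/-- If a vertex `u` has `d_u + 1` distinct local eigenvalues (equivalently, the
local space spanned by the vectors `A^ℓ e_u` has dimension `d_u + 1`) and
`π(u) = {U_0,…,U_r}` is a walk-regular partition around `u`, then `r ≥ d_u`. -/
theorem stmt3 {V : Type*} [Fintype V] [DecidableEq V] (G : SimpleGraph V)
    [DecidableRel G.Adj] (hconn : G.Connected) (u : V) (du r : ℕ)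
    (hdim : Module.finrank ℝ (Submodule.span ℝ
      (Set.range fun ℓ : ℕ => ((G.adjMatrix ℝ) ^ ℓ).mulVec (Pi.single u 1))) = du + 1)
    (U : Fin (r + 1) → Finset V)
    (hU0 : U 0 = {u})
    (hcover : ∀ v : V, ∃ i, v ∈ U i)
    (hdisj : ∀ i j, i ≠ j → ∀ v, v ∈ U i → v ∉ U j)
    (hnonempty : ∀ i, (U i).Nonempty)
    (hwr : ∀ i, ∀ v ∈ U i, ∀ w ∈ U i, ∀ ℓ : ℕ,
      ((G.adjMatrix ℝ) ^ ℓ) u v = ((G.adjMatrix ℝ) ^ ℓ) u w) :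
    du ≤ r := by
  classical
  -- class of a vertex
  set cls : V → Fin (r + 1) := fun v => (hcover v).choose with hcls
  have hclsmem : ∀ v, v ∈ U (cls v) := fun v => (hcover v).choose_spec
  set rep : Fin (r + 1) → V := fun i => (hnonempty i).choose with hrep
  have hrepmem : ∀ i, rep i ∈ U i := fun i => (hnonempty i).choose_spec
  set L : (Fin (r + 1) → ℝ) →ₗ[ℝ] (V → ℝ) := LinearMap.funLeft ℝ ℝ cls with hL
  -- symmetry of powers of adjacency matrix
  have hsym : ∀ ℓ : ℕ, ((G.adjMatrix ℝ) ^ ℓ).IsSymm := fun ℓ =>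
    (SimpleGraph.isSymm_adjMatrix (α := ℝ) (G := G)).pow ℓ
  have hgen : ∀ ℓ : ℕ, ((G.adjMatrix ℝ) ^ ℓ).mulVec (Pi.single u 1) ∈ LinearMap.range L := by
    intro ℓ
    refine ⟨fun i => ((G.adjMatrix ℝ) ^ ℓ) u (rep i), ?_⟩
    funext v
    have h1 : ((G.adjMatrix ℝ) ^ ℓ).mulVec (Pi.single u 1) v = ((G.adjMatrix ℝ) ^ ℓ) v u := by
      have := congrFun (Matrix.mulVec_single_one ((G.adjMatrix ℝ) ^ ℓ) u) v
      simp [Matrix.transpose_apply] at this; simpa using this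
    have h2 : ((G.adjMatrix ℝ) ^ ℓ) v u = ((G.adjMatrix ℝ) ^ ℓ) u v := (hsym ℓ).apply u v
    have h3 := hwr (cls v) (rep (cls v)) (hrepmem _) v (hclsmem v) ℓ
    show (fun i => ((G.adjMatrix ℝ) ^ ℓ) u (rep i)) (cls v) = _
    rw [h1, h2]; exact h3
  have hsub : Submodule.span ℝ
      (Set.range fun ℓ : ℕ => ((G.adjMatrix ℝ) ^ ℓ).mulVec (Pi.single u 1)) ≤
      LinearMap.range L := by
    rw [Submodule.span_le]
    rintro x ⟨ℓ, rfl⟩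
    exact hgen ℓ
  have hle := Submodule.finrank_mono hsub
  have hrng : Module.finrank ℝ (LinearMap.range L) ≤ r + 1 := by
    have := LinearMap.finrank_range_le L
    simpa using this
  rw [hdim] at hle
  omega
end

section
/- Let u be a vertex with d_u+1 distinct local eigenvalues and let π(u) = {U_0,...,U_r} be a walk-regular partition around u. Then r = d_u if and only if every characteristic vector χ_i of U_i lies in the local vector space A(u) = span{A^ℓ e_u : 0 ≤ ℓ ≤ d_u}. -/
/-!
The vectors `A^ℓ e_u` are constant on every class of a walk-regular partition around `u`,
so the local space `A(u)` sits inside the span `W` of the class indicators `χ_0, …, χ_r`,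
which has dimension `r + 1`. Since `dim A(u) = d_u + 1`, the inclusion is an equality exactly
when `r = d_u`, i.e. exactly when every `χ_i` lies in `A(u)`. That `A(u)` is already spanned by
the first `d_u + 1` powers is the usual stabilisation of Krylov subspaces.
-/

open Module Submodule Matrix

section Krylov

variable {K M : Type*} [Field K] [AddCommGroup M] [Module K M]

def krylovSubspace (T : Module.End K M) (x : M) (n : ℕ) : Submodule K M :=
  span K (Set.range fun i : Fin n => (T ^ (i : ℕ)) x)

variable (T : Module.End K M) (x : M)

instance (n : ℕ) : FiniteDimensional K (krylovSubspace T x n) :=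
  FiniteDimensional.span_of_finite K (Set.finite_range _)

lemma krylovSubspace_le_succ (n : ℕ) : krylovSubspace T x n ≤ krylovSubspace T x (n + 1) :=
  span_mono <| Set.range_subset_iff.2 fun i => ⟨i.castSucc, rfl⟩

lemma krylovSubspace_le_span_range (n : ℕ) :
    krylovSubspace T x n ≤ span K (Set.range fun i : ℕ => (T ^ i) x) :=
  span_mono <| Set.range_subset_iff.2 fun i => ⟨i, rfl⟩

lemma map_krylovSubspace_le (n : ℕ) :
    (krylovSubspace T x n).map T ≤ krylovSubspace T x (n + 1) := by
  rw [krylovSubspace, map_span_le]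
  rintro _ ⟨i, rfl⟩
  exact subset_span ⟨i.succ, by simp [pow_succ']⟩

lemma krylovSubspace_eq_span_range_of_succ_eq {n : ℕ}
    (h : krylovSubspace T x (n + 1) = krylovSubspace T x n) :
    krylovSubspace T x n = span K (Set.range fun i : ℕ => (T ^ i) x) := by
  refine le_antisymm (krylovSubspace_le_span_range T x n) (span_le.2 ?_)
  rintro _ ⟨k, rfl⟩
  induction k with
  | zero =>
    rw [← h]
    exact subset_span ⟨0, by simp⟩
  | succ k ih =>
    rw [← h]
    simp only [pow_succ', Module.End.mul_apply]
    exact map_krylovSubspace_le T x n ⟨_, ih, rfl⟩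

lemma krylovSubspace_eq_span_range_or_le_finrank (n : ℕ) :
    krylovSubspace T x n = span K (Set.range fun i : ℕ => (T ^ i) x) ∨
      n ≤ finrank K (krylovSubspace T x n) := by
  induction n with
  | zero => exact Or.inr (Nat.zero_le _)
  | succ n ih =>
    rcases ih with h | h
    · refine Or.inl (le_antisymm (krylovSubspace_le_span_range T x _) ?_)
      exact h ▸ krylovSubspace_le_succ T x n
    · by_cases hsucc : krylovSubspace T x (n + 1) = krylovSubspace T x n
      · exact Or.inl (hsucc.trans (krylovSubspace_eq_span_range_of_succ_eq T x hsucc))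
      · have hlt := (krylovSubspace_le_succ T x n).lt_of_ne (Ne.symm hsucc)
        exact Or.inr (h.trans_lt (finrank_lt_finrank_of_lt hlt))

lemma krylovSubspace_eq_span_range [FiniteDimensional K M] {n : ℕ}
    (hn : finrank K (span K (Set.range fun i : ℕ => (T ^ i) x)) ≤ n) :
    krylovSubspace T x n = span K (Set.range fun i : ℕ => (T ^ i) x) := by
  obtain h | h := krylovSubspace_eq_span_range_or_le_finrank T x n
  · exact h
  · exact eq_of_le_of_finrank_le (krylovSubspace_le_span_range T x n) (hn.trans h)

lemma Matrix.span_range_pow_mulVec_fin_eq {n : Type*} [Fintype n] [DecidableEq n]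
    (A : Matrix n n K) (e : n → K) {d : ℕ}
    (hd : finrank K (span K (Set.range fun ℓ : ℕ => (A ^ ℓ) *ᵥ e)) ≤ d) :
    span K (Set.range fun ℓ : Fin d => (A ^ (ℓ : ℕ)) *ᵥ e) =
      span K (Set.range fun ℓ : ℕ => (A ^ ℓ) *ᵥ e) := by
  have hpow : (fun ℓ : ℕ => (A ^ ℓ) *ᵥ e) = fun ℓ => (toLin' A ^ ℓ) e := by
    simp only [← toLin'_pow, toLin'_apply]
  have hpow_fin : (fun ℓ : Fin d => (A ^ (ℓ : ℕ)) *ᵥ e) =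
      fun ℓ : Fin d => (toLin' A ^ (ℓ : ℕ)) e :=
    funext fun ℓ => congrFun hpow ℓ
  rw [hpow] at hd
  rw [hpow, hpow_fin]
  exact krylovSubspace_eq_span_range _ _ hd

end Krylov

section IndicatorVectors

variable {ι V K : Type*} [Field K] [DecidableEq V] (U : ι → Finset V)

lemma linearIndependent_indicators (hdisj : ∀ i j, i ≠ j → ∀ v, v ∈ U i → v ∉ U j)
    (hnonempty : ∀ i, (U i).Nonempty) :
    LinearIndependent K fun i (v : V) => if v ∈ U i then (1 : K) else 0 := by
  rw [linearIndependent_iff']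
  intro s g hg i hi
  obtain ⟨v, hv⟩ := hnonempty i
  have := congrFun hg v
  simp only [Finset.sum_apply, Pi.smul_apply, smul_eq_mul, Pi.zero_apply] at this
  rwa [Finset.sum_eq_single i (fun j _ hj => by rw [if_neg (hdisj i j hj.symm v hv), mul_zero])
    (absurd hi), if_pos hv, mul_one] at this

lemma mem_span_indicators_of_forall_eq [Fintype ι] (hcover : ∀ v : V, ∃ i, v ∈ U i)
    (hdisj : ∀ i j, i ≠ j → ∀ v, v ∈ U i → v ∉ U j) (f : V → K)
    (hf : ∀ i, ∀ v ∈ U i, ∀ w ∈ U i, f v = f w) :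
    f ∈ span K (Set.range fun i (v : V) => if v ∈ U i then (1 : K) else 0) := by
  have hsum : f = ∑ i, (if h : (U i).Nonempty then f h.choose else 0) •
      fun v => if v ∈ U i then (1 : K) else 0 := by
    funext v
    obtain ⟨i, hv⟩ := hcover v
    simp only [Finset.sum_apply, Pi.smul_apply, smul_eq_mul]
    rw [Finset.sum_eq_single i (fun j _ hj => by rw [if_neg (hdisj i j hj.symm v hv), mul_zero])
      (absurd (Finset.mem_univ i)), if_pos hv, mul_one, dif_pos ⟨v, hv⟩]
    exact hf i v hv _ (Exists.choose_spec _)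
  rw [hsum]
  exact sum_mem fun i _ => smul_mem _ _ (subset_span ⟨i, rfl⟩)

end IndicatorVectors

lemma SimpleGraph.adjMatrix_pow_mulVec_single_one_apply {V R : Type*} [Fintype V]
    [DecidableEq V] [CommSemiring R] (G : SimpleGraph V) [DecidableRel G.Adj] (ℓ : ℕ) (u v : V) :
    ((G.adjMatrix R ^ ℓ) *ᵥ Pi.single u 1) v = (G.adjMatrix R ^ ℓ) u v := by
  rw [Matrix.mulVec_single_one]
  exact (G.isSymm_adjMatrix.pow ℓ).apply u v

theorem stmt4_general {V : Type*} [Fintype V] [DecidableEq V] (G : SimpleGraph V)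
    [DecidableRel G.Adj] (u : V) (du r : ℕ)
    (hdim : Module.finrank ℝ (Submodule.span ℝ
      (Set.range fun ℓ : ℕ => ((G.adjMatrix ℝ) ^ ℓ).mulVec (Pi.single u 1))) = du + 1)
    (U : Fin (r + 1) → Finset V)
    (hcover : ∀ v : V, ∃ i, v ∈ U i)
    (hdisj : ∀ i j, i ≠ j → ∀ v, v ∈ U i → v ∉ U j)
    (hnonempty : ∀ i, (U i).Nonempty)
    (hwr : ∀ i, ∀ v ∈ U i, ∀ w ∈ U i, ∀ ℓ : ℕ,
      ((G.adjMatrix ℝ) ^ ℓ) u v = ((G.adjMatrix ℝ) ^ ℓ) u w) :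
    r = du ↔
      ∀ i, (fun v => if v ∈ U i then (1 : ℝ) else 0) ∈
        Submodule.span ℝ (Set.range fun ℓ : Fin (du + 1) =>
          ((G.adjMatrix ℝ) ^ (ℓ : ℕ)).mulVec (Pi.single u 1)) := by
  set localSpace := span ℝ (Set.range fun ℓ : ℕ => (G.adjMatrix ℝ ^ ℓ) *ᵥ Pi.single u 1)
  set W := span ℝ (Set.range fun i (v : V) => if v ∈ U i then (1 : ℝ) else 0)
  have hlocal_le : localSpace ≤ W := span_le.2 <| Set.range_subset_iff.2 fun ℓ =>
    mem_span_indicators_of_forall_eq U hcover hdisj _ fun i v hv w hw => by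
      simp only [SimpleGraph.adjMatrix_pow_mulVec_single_one_apply]
      exact hwr i v hv w hw ℓ
  have hW : finrank ℝ W = r + 1 := by
    rw [finrank_span_eq_card (linearIndependent_indicators U hdisj hnonempty), Fintype.card_fin]
  rw [Matrix.span_range_pow_mulVec_fin_eq _ _ hdim.le]
  calc r = du ↔ finrank ℝ localSpace = finrank ℝ W := by rw [hdim, hW]; omega
    _ ↔ localSpace = W := ⟨eq_of_le_of_finrank_eq hlocal_le, fun h => by rw [h]⟩
    _ ↔ W ≤ localSpace := ⟨ge_of_eq, hlocal_le.antisymm⟩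
    _ ↔ _ := by rw [span_le, Set.range_subset_iff]; rfl

/-- Let `u` have `d_u + 1` distinct local eigenvalues and let
`π(u) = {U_0,…,U_r}` be a walk-regular partition around `u`. Then `r = d_u` iff every
characteristic vector `χ_i` of a class `U_i` lies in the local vector space
`A(u) = span{A^ℓ e_u : 0 ≤ ℓ ≤ d_u}`. -/
theorem stmt4 {V : Type*} [Fintype V] [DecidableEq V] (G : SimpleGraph V)
    [DecidableRel G.Adj] (hconn : G.Connected) (u : V) (du r : ℕ)
    (hdim : Module.finrank ℝ (Submodule.span ℝ
      (Set.range fun ℓ : ℕ => ((G.adjMatrix ℝ) ^ ℓ).mulVec (Pi.single u 1))) = du + 1)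
    (U : Fin (r + 1) → Finset V)
    (hU0 : U 0 = {u})
    (hcover : ∀ v : V, ∃ i, v ∈ U i)
    (hdisj : ∀ i j, i ≠ j → ∀ v, v ∈ U i → v ∉ U j)
    (hnonempty : ∀ i, (U i).Nonempty)
    (hwr : ∀ i, ∀ v ∈ U i, ∀ w ∈ U i, ∀ ℓ : ℕ,
      ((G.adjMatrix ℝ) ^ ℓ) u v = ((G.adjMatrix ℝ) ^ ℓ) u w) :
    r = du ↔
      ∀ i, (fun v => if v ∈ U i then (1 : ℝ) else 0) ∈
        Submodule.span ℝ (Set.range fun ℓ : Fin (du + 1) =>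
          ((G.adjMatrix ℝ) ^ (ℓ : ℕ)).mulVec (Pi.single u 1)) :=
  stmt4_general G u du r hdim U hcover hdisj hnonempty hwr
end

section
/- Let π(u) = {U_0,...,U_r} be a walk-regular partition around u with r = d_u (equivalently, a quotient-polynomial partition). Then π(u) is a regular (equitable) partition: |Γ(v) ∩ U_j| does not depend on the choice of v ∈ U_i. -/
/-- A walk-regular partition `π(u) = {U_0,…,U_r}` around `u` with `r = d_u`
(equivalently, a quotient-polynomial partition) is regular (equitable): the number
`|Γ(v) ∩ U_j|` does not depend on the choice of `v ∈ U_i`. -/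
theorem stmt5 {V : Type*} [Fintype V] [DecidableEq V] (G : SimpleGraph V)
    [DecidableRel G.Adj] (hconn : G.Connected) (u : V) (du r : ℕ)
    (hdim : Module.finrank ℝ (Submodule.span ℝ
      (Set.range fun ℓ : ℕ => ((G.adjMatrix ℝ) ^ ℓ).mulVec (Pi.single u 1))) = du + 1)
    (U : Fin (r + 1) → Finset V)
    (hU0 : U 0 = {u})
    (hcover : ∀ v : V, ∃ i, v ∈ U i)
    (hdisj : ∀ i j, i ≠ j → ∀ v, v ∈ U i → v ∉ U j)
    (hnonempty : ∀ i, (U i).Nonempty)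
    (hwr : ∀ i, ∀ v ∈ U i, ∀ w ∈ U i, ∀ ℓ : ℕ,
      ((G.adjMatrix ℝ) ^ ℓ) u v = ((G.adjMatrix ℝ) ^ ℓ) u w)
    (hr : r = du) :
    ∀ i j, ∃ b : ℕ, ∀ v ∈ U i, ((U j).filter (fun w => G.Adj v w)).card = b := by
  classical
  subst hr
  set A : Matrix V V ℝ := G.adjMatrix ℝ with hA
  -- characteristic vectors of the classes
  set χ : Fin (r + 1) → (V → ℝ) := fun i v => if v ∈ U i then 1 else 0 with hχ
  choose idx hidx using hcover
  choose rep hrep using hnonempty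
  have huniq : ∀ v (i : Fin (r + 1)), v ∈ U i → i = idx v := by
    intro v i hi
    by_contra h
    exact hdisj i (idx v) h v hi (hidx v)
  -- symmetry of powers of A
  have hsymm : ∀ (ℓ : ℕ) (v w : V), (A ^ ℓ) v w = (A ^ ℓ) w v := by
    intro ℓ v w
    have h : (A ^ ℓ).IsSymm := (G.isSymm_adjMatrix (α := ℝ)).pow ℓ
    exact (h.apply w v)
  -- the walk vectors
  set f : ℕ → (V → ℝ) := fun ℓ => (A ^ ℓ).mulVec (Pi.single u 1) with hf
  have hfval : ∀ ℓ v, f ℓ v = (A ^ ℓ) u v := by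
    intro ℓ v
    simp [hf, Matrix.mulVec_single, hsymm ℓ v u]
  set D : Submodule ℝ (V → ℝ) := Submodule.span ℝ (Set.range f) with hD
  set S : Submodule ℝ (V → ℝ) := Submodule.span ℝ (Set.range χ) with hS
  -- D ≤ S
  have hDS : D ≤ S := by
    rw [hD, Submodule.span_le]
    rintro _ ⟨ℓ, rfl⟩
    have : f ℓ = ∑ i : Fin (r + 1), ((A ^ ℓ) u (rep i)) • χ i := by
      funext v
      rw [hfval]
      have : ∀ i : Fin (r + 1), (((A ^ ℓ) u (rep i)) • χ i) v
          = if i = idx v then (A ^ ℓ) u v else 0 := by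
        intro i
        by_cases h : i = idx v
        · subst h
          have hv : v ∈ U (idx v) := hidx v
          simp [hχ, hv, hwr (idx v) (rep (idx v)) (hrep (idx v)) v hv ℓ]
        · have hv : v ∉ U i := by
            intro hvi; exact h (huniq v i hvi)
          simp [hχ, hv, h]
      simp only [Finset.sum_apply, this, Finset.sum_ite_eq' Finset.univ (idx v),
        Finset.mem_univ, if_true]
    rw [this]
    exact Submodule.sum_mem _ fun i _ =>
      Submodule.smul_mem _ _ (Submodule.subset_span ⟨i, rfl⟩)
  -- χ is linearly independent
  have hli : LinearIndependent ℝ χ := by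
    rw [Fintype.linearIndependent_iff]
    intro g hg i
    have := congrFun hg (rep i)
    simp only [Finset.sum_apply, Pi.smul_apply, Pi.zero_apply, smul_eq_mul] at this
    have hsum : ∀ k : Fin (r + 1), g k * χ k (rep i) = if k = i then g i else 0 := by
      intro k
      by_cases h : k = i
      · subst h; simp [hχ, hrep k]
      · have : rep i ∉ U k := by
          intro hm
          exact h ((huniq (rep i) k hm).trans (huniq (rep i) i (hrep i)).symm)
        simp [hχ, this, h]
    rw [Finset.sum_congr rfl (fun k _ => hsum k),
      Finset.sum_ite_eq' Finset.univ i] at this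
    simpa using this
  have hSrank : Module.finrank ℝ S = r + 1 := by
    rw [hS, finrank_span_eq_card hli]
    simp
  -- D = S
  have hDeq : D = S :=
    Submodule.eq_of_le_of_finrank_eq hDS (by rw [hdim, hSrank])
  -- A preserves D
  have hAD : ∀ x ∈ D, A.mulVec x ∈ D := by
    intro x hx
    have : A.mulVecLin x ∈ Submodule.map A.mulVecLin D := ⟨x, hx, rfl⟩
    have hmap : Submodule.map A.mulVecLin D ≤ D := by
      rw [hD, Submodule.map_span, Submodule.span_le]
      rintro _ ⟨_, ⟨ℓ, rfl⟩, rfl⟩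
      refine Submodule.subset_span ⟨ℓ + 1, ?_⟩
      simp only [hf, Matrix.mulVecLin_apply, Matrix.mulVec_mulVec]
      rw [← pow_succ']
    simpa using hmap this
  -- every element of S is constant on classes
  have hconst : ∀ x ∈ S, ∀ i : Fin (r + 1), ∀ v ∈ U i, ∀ w ∈ U i, x v = x w := by
    intro x hx
    rw [hS] at hx
    induction hx using Submodule.span_induction with
    | mem x h =>
      obtain ⟨k, rfl⟩ := h
      intro i v hv w hw
      by_cases hk : k = i
      · subst hk; simp [hχ, hv, hw]
      · have hv' : v ∉ U k := fun hm => hk ((huniq v k hm).trans (huniq v i hv).symm)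
        have hw' : w ∉ U k := fun hm => hk ((huniq w k hm).trans (huniq w i hw).symm)
        simp [hχ, hv', hw']
    | zero => intro i v _ w _; rfl
    | add x y _ _ hx hy =>
      intro i v hv w hw
      simp [hx i v hv w hw, hy i v hv w hw]
    | smul a x _ hx =>
      intro i v hv w hw
      simp [hx i v hv w hw]
  -- the key vector: A χ_j counts neighbors in U j
  have hcount : ∀ (j : Fin (r + 1)) (v : V),
      (A.mulVec (χ j)) v = (((U j).filter (fun w => G.Adj v w)).card : ℝ) := by
    intro j v
    rw [hA, SimpleGraph.adjMatrix_mulVec_apply]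
    simp only [hχ]
    rw [Finset.sum_boole]
    norm_cast
    congr 1
    ext w
    simp [SimpleGraph.mem_neighborFinset, and_comm]
  intro i j
  have hχjD : χ j ∈ D := hDeq ▸ Submodule.subset_span ⟨j, rfl⟩
  have hAχ : A.mulVec (χ j) ∈ S := hDS (hAD _ hχjD)
  refine ⟨((U j).filter (fun w => G.Adj (rep i) w)).card, ?_⟩
  intro v hv
  have := hconst _ hAχ i v hv (rep i) (hrep i)
  rw [hcount j v, hcount j (rep i)] at this
  exact_mod_cast this
end

section
/- If π(u) = {U_0,...,U_r} is a partition with U_0 = {u} such that each characteristic vector satisfies χ_i = p_i(A)e_u for some polynomial p_i of degree at most r, and u has d_u+1 distinct local eigenvalues, then r = d_u and span{χ_0,...,χ_r} equals span{A^ℓ e_u : ℓ ≥ 0}, with χ_0,...,χ_r a basis. -/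
open Polynomial Matrix

private lemma stmt6_sum_mulVec {ι V : Type*} [Fintype V] (s : Finset ι)
    (M : ι → Matrix V V ℝ) (v : V → ℝ) :
    (∑ i ∈ s, M i).mulVec v = ∑ i ∈ s, (M i).mulVec v := by
  induction s using Finset.cons_induction with
  | empty => simp
  | cons a s ha ih => simp [Matrix.add_mulVec, ih]

private lemma stmt6_aeval_mem {V : Type*} [Fintype V] [DecidableEq V]
    (A : Matrix V V ℝ) (e : V → ℝ) (f : Polynomial ℝ) :
    (Polynomial.aeval A f).mulVec e ∈
      Submodule.span ℝ (Set.range fun ℓ : ℕ => (A ^ ℓ).mulVec e) := by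
  induction f using Polynomial.induction_on' with
  | add f g hf hg =>
      rw [map_add, Matrix.add_mulVec]; exact Submodule.add_mem _ hf hg
  | monomial n a =>
      have h : (Polynomial.aeval A (Polynomial.monomial n a)).mulVec e
          = a • (A ^ n).mulVec e := by
        rw [Polynomial.aeval_monomial, ← Algebra.smul_def, Matrix.smul_mulVec]
      rw [h]
      exact Submodule.smul_mem _ _ (Submodule.subset_span ⟨n, rfl⟩)

/-- If `π(u) = {U_0,…,U_r}` is a partition with `U_0 = {u}` such that each
characteristic vector satisfies `χ_i = p_i(A) e_u` for some polynomial `p_i` of degree at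
most `r`, and `u` has `d_u + 1` distinct local eigenvalues, then `r = d_u`,
`span{χ_0,…,χ_r} = span{A^ℓ e_u : ℓ ≥ 0}`, and `χ_0,…,χ_r` form a basis (they are
linearly independent). The graph is connected and `k`-regular. -/
theorem stmt6 {V : Type*} [Fintype V] [DecidableEq V] (G : SimpleGraph V)
    [DecidableRel G.Adj] (hconn : G.Connected) (k : ℕ) (hregular : G.IsRegularOfDegree k)
    (u : V) (du r : ℕ)
    (hdim : Module.finrank ℝ (Submodule.span ℝ
      (Set.range fun ℓ : ℕ => ((G.adjMatrix ℝ) ^ ℓ).mulVec (Pi.single u 1))) = du + 1)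
    (U : Fin (r + 1) → Finset V)
    (hU0 : U 0 = {u})
    (hcover : ∀ v : V, ∃ i, v ∈ U i)
    (hdisj : ∀ i j, i ≠ j → ∀ v, v ∈ U i → v ∉ U j)
    (hnonempty : ∀ i, (U i).Nonempty)
    (p : Fin (r + 1) → Polynomial ℝ)
    (hdeg : ∀ i, (p i).natDegree ≤ r)
    (hchi : ∀ i, (Polynomial.aeval (G.adjMatrix ℝ) (p i)).mulVec (Pi.single u 1)
      = fun v => if v ∈ U i then (1 : ℝ) else 0) :
    r = du ∧
    Submodule.span ℝ (Set.range fun i : Fin (r + 1) =>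
        (fun v => if v ∈ U i then (1 : ℝ) else 0 : V → ℝ)) =
      Submodule.span ℝ (Set.range fun ℓ : ℕ =>
        ((G.adjMatrix ℝ) ^ ℓ).mulVec (Pi.single u 1)) ∧
    LinearIndependent ℝ (fun i : Fin (r + 1) =>
      (fun v => if v ∈ U i then (1 : ℝ) else 0 : V → ℝ)) := by
  classical
  set A : Matrix V V ℝ := G.adjMatrix ℝ with hAdef
  set e : V → ℝ := Pi.single u 1 with hedef
  set W : Submodule ℝ (V → ℝ) :=
    Submodule.span ℝ (Set.range fun ℓ : ℕ => (A ^ ℓ).mulVec e) with hWdef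
  -- linear independence of the characteristic vectors
  have hindep : LinearIndependent ℝ (fun i : Fin (r + 1) =>
      (fun v => if v ∈ U i then (1 : ℝ) else 0 : V → ℝ)) := by
    rw [Fintype.linearIndependent_iff]
    intro c hc i
    obtain ⟨v, hv⟩ := hnonempty i
    have h := congrFun hc v
    simp only [Finset.sum_apply, Pi.smul_apply, smul_eq_mul, Pi.zero_apply] at h
    rwa [Finset.sum_eq_single i
        (fun j _ hj => by rw [if_neg (hdisj i j (Ne.symm hj) v hv), mul_zero])
        (fun h' => absurd (Finset.mem_univ i) h'), if_pos hv, mul_one] at h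
  -- sum of the characteristic vectors is the all-ones vector
  have hsum : (∑ i, (fun v => if v ∈ U i then (1 : ℝ) else 0 : V → ℝ)) = fun _ => 1 := by
    funext v
    obtain ⟨i, hi⟩ := hcover v
    rw [Finset.sum_apply]
    rw [Finset.sum_eq_single i
        (fun j _ hj => if_neg (hdisj i j (Ne.symm hj) v hi))
        (fun h' => absurd (Finset.mem_univ i) h'), if_pos hi]
  -- each characteristic vector lies in W
  have hmem : ∀ i, (fun v => if v ∈ U i then (1 : ℝ) else 0 : V → ℝ) ∈ W := by
    intro i
    rw [← hchi i]
    exact stmt6_aeval_mem A e (p i)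
  have hspanle : Submodule.span ℝ (Set.range fun i : Fin (r + 1) =>
      (fun v => if v ∈ U i then (1 : ℝ) else 0 : V → ℝ)) ≤ W := by
    rw [Submodule.span_le]
    rintro _ ⟨i, rfl⟩
    exact hmem i
  have hrankχ : Module.finrank ℝ (Submodule.span ℝ (Set.range fun i : Fin (r + 1) =>
      (fun v => if v ∈ U i then (1 : ℝ) else 0 : V → ℝ))) = r + 1 := by
    rw [finrank_span_eq_card hindep, Fintype.card_fin]
  have hrle : r + 1 ≤ du + 1 := by
    rw [← hrankχ, ← hdim]
    exact Submodule.finrank_mono hspanle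
  -- the polynomial q with q(A) e = all-ones
  set q : Polynomial ℝ := ∑ i, p i with hqdef
  have hq1 : (Polynomial.aeval A q).mulVec e = fun _ => 1 := by
    rw [hqdef, map_sum, stmt6_sum_mulVec]
    calc ∑ i, (Polynomial.aeval A (p i)).mulVec e
        = ∑ i, (fun v => if v ∈ U i then (1 : ℝ) else 0 : V → ℝ) :=
          Finset.sum_congr rfl fun i _ => hchi i
      _ = fun _ => 1 := hsum
  have hq0 : q ≠ 0 := by
    intro h
    have h1 := congrFun hq1 u
    rw [h, map_zero, Matrix.zero_mulVec] at h1
    exact one_ne_zero h1.symm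
  have hqdeg : q.natDegree ≤ r :=
    Polynomial.natDegree_sum_le_of_forall_le _ _ fun i _ => hdeg i
  -- the polynomial f = (X - k) q kills e
  set f : Polynomial ℝ := (Polynomial.X - Polynomial.C (k : ℝ)) * q with hfdef
  have hfne : f ≠ 0 := mul_ne_zero (Polynomial.X_sub_C_ne_zero _) hq0
  have hfdeg : f.natDegree = 1 + q.natDegree := by
    rw [hfdef, Polynomial.natDegree_mul (Polynomial.X_sub_C_ne_zero _) hq0,
      Polynomial.natDegree_X_sub_C]
  have hAone : A.mulVec (fun _ => (1 : ℝ)) = fun _ => (k : ℝ) := by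
    funext v
    have h := SimpleGraph.adjMatrix_mulVec_const_apply_of_regular (α := ℝ) (a := (1 : ℝ))
      hregular (v := v)
    rw [mul_one] at h
    exact h
  have hf0 : (Polynomial.aeval A f).mulVec e = 0 := by
    rw [hfdef, _root_.map_mul, ← Matrix.mulVec_mulVec, hq1, map_sub, Polynomial.aeval_X,
      Polynomial.aeval_C, Matrix.sub_mulVec, hAone, Algebra.algebraMap_eq_smul_one,
      Matrix.smul_mulVec, Matrix.one_mulVec]
    funext v
    simp
  -- expansion lemma
  have hexp : ∀ (g : Polynomial ℝ) (n : ℕ), g.natDegree < n → ∀ m : ℕ,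
      (A ^ m * Polynomial.aeval A g).mulVec e
        = ∑ i ∈ Finset.range n, g.coeff i • (A ^ (m + i)).mulVec e := by
    intro g n hn m
    rw [Polynomial.aeval_eq_sum_range' hn, Finset.mul_sum, stmt6_sum_mulVec]
    refine Finset.sum_congr rfl fun i _ => ?_
    rw [mul_smul_comm, ← pow_add, Matrix.smul_mulVec]
  set D := f.natDegree with hDdef
  have hD1 : 1 ≤ D := by omega
  have hDr : D ≤ r + 1 := by omega
  have hgdeg : f.eraseLead.natDegree < D :=
    lt_of_le_of_lt (Polynomial.eraseLead_natDegree_le f) (by omega)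
  have hc : f.leadingCoeff ≠ 0 := Polynomial.leadingCoeff_ne_zero.mpr hfne
  set Wr : Submodule ℝ (V → ℝ) :=
    Submodule.span ℝ (Set.range fun i : Fin (r + 1) => (A ^ (i : ℕ)).mulVec e) with hWrdef
  have hkey : ∀ m : ℕ, (A ^ m).mulVec e ∈ Wr := by
    intro m
    induction m using Nat.strong_induction_on with
    | _ m ih =>
      by_cases hm : m ≤ r
      · exact Submodule.subset_span ⟨⟨m, by omega⟩, rfl⟩
      · have hDm : D ≤ m := by omega
        have h1 : (A ^ (m - D) * Polynomial.aeval A f).mulVec e = 0 := by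
          rw [← Matrix.mulVec_mulVec, hf0, Matrix.mulVec_zero]
        have h2 : Polynomial.aeval A f
            = Polynomial.aeval A f.eraseLead + f.leadingCoeff • A ^ D := by
          conv_lhs => rw [← Polynomial.eraseLead_add_C_mul_X_pow f]
          rw [map_add, _root_.map_mul, Polynomial.aeval_C, Polynomial.aeval_X_pow,
            ← Algebra.smul_def]
        rw [h2, mul_add, Matrix.add_mulVec, mul_smul_comm, ← pow_add,
          Nat.sub_add_cancel hDm, Matrix.smul_mulVec,
          hexp f.eraseLead D hgdeg (m - D)] at h1
        have h4 : f.leadingCoeff • (A ^ m).mulVec e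
            = -(∑ i ∈ Finset.range D,
                f.eraseLead.coeff i • (A ^ (m - D + i)).mulVec e) :=
          eq_neg_of_add_eq_zero_right h1
        have h5 : (A ^ m).mulVec e
            = f.leadingCoeff⁻¹ • -(∑ i ∈ Finset.range D,
                f.eraseLead.coeff i • (A ^ (m - D + i)).mulVec e) := by
          rw [← h4, inv_smul_smul₀ hc]
        rw [h5]
        refine Submodule.smul_mem _ _ (Submodule.neg_mem _
          (Submodule.sum_mem _ fun i hi => ?_))
        by_cases hci : f.eraseLead.coeff i = 0
        · rw [hci, zero_smul]; exact Submodule.zero_mem _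
        · refine Submodule.smul_mem _ _ (ih _ ?_)
          have hile : i ≤ f.eraseLead.natDegree := Polynomial.le_natDegree_of_ne_zero hci
          omega
  have hWle : W ≤ Wr := by
    rw [hWdef, Submodule.span_le]
    rintro _ ⟨ℓ, rfl⟩
    exact hkey ℓ
  have hWr_rank : Module.finrank ℝ Wr ≤ r + 1 := by
    have h := finrank_range_le_card (R := ℝ)
      (b := fun i : Fin (r + 1) => (A ^ (i : ℕ)).mulVec e)
    simpa [Set.finrank] using h
  have hdur : du + 1 ≤ r + 1 := by
    rw [← hdim]
    exact le_trans (Submodule.finrank_mono hWle) hWr_rank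
  have hrdu : r = du := by omega
  refine ⟨hrdu, ?_, hindep⟩
  exact Submodule.eq_of_le_of_finrank_eq hspanle (by rw [hrankχ, hdim, hrdu])
end

section
/- Let Γ be a connected graph with d+1 distinct eigenvalues and let π(J) = {J_0,...,J_r} be the walk-regular partition of V×V, i.e. the partition by equality of the walk vectors ((A^0)_{uv},...,(A^d)_{uv}). Then r ≥ d, with equality if and only if each class matrix J_i is a polynomial in A. -/
open scoped Classical

/-!
The class matrices `J_i` have disjoint nonempty supports, so they are linearly independent
and span a space `Q` of dimension `r + 1`. Each power `A^ℓ` with `ℓ ≤ d` is constant on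
every class, so `1, A, …, A^d`, a basis of the adjacency algebra `P`, lie in `Q`.
Hence `d + 1 ≤ r + 1`, with equality iff `P = Q`, i.e. iff every `J_i` lies in `P`.
-/

open Function Module Polynomial Submodule

namespace Matrix

variable {m n R : Type*}

noncomputable def indicator [Zero R] [One R] (s : Set (m × n)) : Matrix m n R :=
  of fun v w => if (v, w) ∈ s then 1 else 0

@[simp]
theorem indicator_apply [Zero R] [One R] (s : Set (m × n)) (v : m) (w : n) :
    indicator s v w = if (v, w) ∈ s then (1 : R) else 0 :=
  rfl

variable {ι : Type*} {J : ι → Set (m × n)}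

theorem sum_smul_indicator_apply_of_mem [Semiring R] (hdisj : Pairwise (Disjoint on J))
    (s : Finset ι) (c : ι → R) {i : ι} (hi : i ∈ s) {v : m} {w : n} (hvw : (v, w) ∈ J i) :
    (∑ j ∈ s, c j • indicator (J j)) v w = c i := by
  rw [Matrix.sum_apply, Finset.sum_eq_single_of_mem i hi]
  · simp [hvw]
  · intro j _ hji
    have hvw' : (v, w) ∉ J j := Set.disjoint_left.mp (hdisj hji.symm) hvw
    simp [hvw']

theorem linearIndependent_indicator [Ring R] (hdisj : Pairwise (Disjoint on J))
    (hne : ∀ i, (J i).Nonempty) :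
    LinearIndependent R fun i => (indicator (J i) : Matrix m n R) := by
  rw [linearIndependent_iff']
  intro s c hc i hi
  obtain ⟨⟨v, w⟩, hvw⟩ := hne i
  simpa [sum_smul_indicator_apply_of_mem hdisj s c hi hvw] using congrFun (congrFun hc v) w

theorem mem_span_indicator [Semiring R] [Fintype ι] (hcover : ∀ q : m × n, ∃ i, q ∈ J i)
    (hdisj : Pairwise (Disjoint on J)) {M : Matrix m n R}
    (hM : ∀ i, ∀ q ∈ J i, ∀ q' ∈ J i, M q.1 q.2 = M q'.1 q'.2) :
    M ∈ span R (Set.range fun i => (indicator (J i) : Matrix m n R)) := by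
  let c : ι → R := fun i => if h : (J i).Nonempty then M h.some.1 h.some.2 else 0
  have hM_eq : M = ∑ i, c i • indicator (J i) := by
    ext v w
    obtain ⟨i, hvw⟩ := hcover (v, w)
    rw [sum_smul_indicator_apply_of_mem hdisj _ c (Finset.mem_univ i) hvw]
    simp only [c]
    rw [dif_pos ⟨_, hvw⟩]
    exact hM i _ hvw _ (Set.Nonempty.some_mem _)
  rw [hM_eq]
  exact sum_mem fun i _ => smul_mem _ _ (subset_span ⟨i, rfl⟩)

end Matrix

section SpanPow

variable {K S : Type*} [Field K] [Ring S] [Algebra K S]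

theorem finrank_span_pow_minpoly (x : S) :
    finrank K (span K (Set.range fun i : Fin (minpoly K x).natDegree => x ^ (i : ℕ))) =
      (minpoly K x).natDegree := by
  rw [finrank_span_eq_card (linearIndependent_pow x), Fintype.card_fin]

theorem mem_span_pow_minpoly_iff {x y : S} (hx : IsIntegral K x) :
    y ∈ span K (Set.range fun i : Fin (minpoly K x).natDegree => x ^ (i : ℕ)) ↔
      ∃ p : K[X], aeval x p = y := by
  refine ⟨fun hy => ?_, fun ⟨p, hp⟩ => hx.mem_span_pow ⟨p, hp.symm⟩⟩
  have hle : span K (Set.range fun i : Fin (minpoly K x).natDegree => x ^ (i : ℕ)) ≤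
      Subalgebra.toSubmodule (aeval x).range := by
    rw [span_le]
    rintro _ ⟨i, rfl⟩
    exact ⟨X ^ (i : ℕ), by simp⟩
  exact hle hy

end SpanPow

section FinrankLeSpan

variable {K M ι : Type*} [Field K] [AddCommGroup M] [Module K M] [Fintype ι] {v : ι → M}
  {P : Submodule K M}

theorem finrank_le_card_of_le_span (hv : LinearIndependent K v)
    (hP : P ≤ span K (Set.range v)) : finrank K P ≤ Fintype.card ι := by
  have := FiniteDimensional.span_of_finite K (Set.finite_range v)
  exact finrank_span_eq_card hv ▸ finrank_mono hP

theorem finrank_eq_card_iff_of_le_span (hv : LinearIndependent K v)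
    (hP : P ≤ span K (Set.range v)) : finrank K P = Fintype.card ι ↔ ∀ i, v i ∈ P := by
  have := FiniteDimensional.span_of_finite K (Set.finite_range v)
  rw [← finrank_span_eq_card hv]
  constructor
  · intro h i
    rw [eq_of_le_of_finrank_eq hP h]
    exact subset_span ⟨i, rfl⟩
  · intro h
    rw [le_antisymm hP (span_le.2 (Set.range_subset_iff.2 h))]

end FinrankLeSpan

theorem stmt7_general {V : Type*} [Fintype V] [DecidableEq V] (G : SimpleGraph V)
    [DecidableRel G.Adj] (d r : ℕ)
    (hd : (minpoly ℝ (G.adjMatrix ℝ)).natDegree = d + 1)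
    (J : Fin (r + 1) → Set (V × V))
    (hcover : ∀ q : V × V, ∃ i, q ∈ J i)
    (hdisj : ∀ i j, i ≠ j → Disjoint (J i) (J j))
    (hnonempty : ∀ i, (J i).Nonempty)
    (hclass : ∀ i, ∀ q ∈ J i, ∀ q' ∈ J i, ∀ ℓ : ℕ, ℓ ≤ d →
      ((G.adjMatrix ℝ) ^ ℓ) q.1 q.2 = ((G.adjMatrix ℝ) ^ ℓ) q'.1 q'.2) :
    d ≤ r ∧
    (r = d ↔ ∀ i, ∃ p : Polynomial ℝ,
      Polynomial.aeval (G.adjMatrix ℝ) p =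
        Matrix.of (fun v w => if (v, w) ∈ J i then (1 : ℝ) else 0)) := by
  set A := G.adjMatrix ℝ
  have hdisj' : Pairwise (Disjoint on J) := fun i j => hdisj i j
  have hind := Matrix.linearIndependent_indicator (R := ℝ) hdisj' hnonempty
  have hpow_le : span ℝ (Set.range fun i : Fin (minpoly ℝ A).natDegree => A ^ (i : ℕ)) ≤
      span ℝ (Set.range fun i => Matrix.indicator (J i)) := by
    rw [span_le]
    rintro _ ⟨ℓ, rfl⟩
    exact Matrix.mem_span_indicator hcover hdisj' fun i q hq q' hq' =>
      hclass i q hq q' hq' ℓ (by omega)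
  have hrank := finrank_span_pow_minpoly (K := ℝ) A
  refine ⟨?_, ?_⟩
  · have := finrank_le_card_of_le_span hind hpow_le
    rw [hrank, hd, Fintype.card_fin] at this
    omega
  · have hiff := finrank_eq_card_iff_of_le_span hind hpow_le
    simp only [mem_span_pow_minpoly_iff (IsIntegral.of_finite ℝ A), hrank, hd,
      Fintype.card_fin] at hiff
    exact (by omega : r = d ↔ d + 1 = r + 1).trans hiff

/-- Let `Γ` be a connected graph with `d + 1` distinct eigenvalues (the minimal
polynomial of `A` has degree `d + 1`) and let `π(J) = {J_0,…,J_r}` be the walk-regular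
partition of `V × V`, i.e. the partition by equality of the walk vectors
`((A^0)_{uv},…,(A^d)_{uv})`. Then `r ≥ d`, with equality iff each class matrix `J_i`
is a polynomial in `A`. -/
theorem stmt7 {V : Type*} [Fintype V] [DecidableEq V] (G : SimpleGraph V)
    [DecidableRel G.Adj] (hconn : G.Connected) (d r : ℕ)
    (hd : (minpoly ℝ (G.adjMatrix ℝ)).natDegree = d + 1)
    (J : Fin (r + 1) → Set (V × V))
    (hcover : ∀ q : V × V, ∃ i, q ∈ J i)
    (hdisj : ∀ i j, i ≠ j → Disjoint (J i) (J j))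
    (hnonempty : ∀ i, (J i).Nonempty)
    (hclass : ∀ i, ∀ q ∈ J i, ∀ q' ∈ J i, ∀ ℓ : ℕ, ℓ ≤ d →
      ((G.adjMatrix ℝ) ^ ℓ) q.1 q.2 = ((G.adjMatrix ℝ) ^ ℓ) q'.1 q'.2)
    (hsep : ∀ i j, ∀ q ∈ J i, ∀ q' ∈ J j,
      (∀ ℓ : ℕ, ℓ ≤ d →
        ((G.adjMatrix ℝ) ^ ℓ) q.1 q.2 = ((G.adjMatrix ℝ) ^ ℓ) q'.1 q'.2) → i = j) :
    d ≤ r ∧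
    (r = d ↔ ∀ i, ∃ p : Polynomial ℝ,
      Polynomial.aeval (G.adjMatrix ℝ) p =
        Matrix.of (fun v w => if (v, w) ∈ J i then (1 : ℝ) else 0)) :=
  stmt7_general G d r hd J hcover hdisj hnonempty hclass
end

section
/- Every quotient-polynomial graph is walk-regular: the class J_0 containing the diagonal pairs equals exactly the diagonal, i.e. J_0 = I, equivalently (A^ℓ)_{uu} is independent of the vertex u for every ℓ. -/
open scoped Classical

/-- The 0/1 matrix of the walk-regular class of the pair `(u,v)`. -/
noncomputable def walkClassMatrix {V : Type*} [Fintype V] [DecidableEq V]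
    (G : SimpleGraph V) [DecidableRel G.Adj] (u v : V) : Matrix V V ℝ :=
  Matrix.of fun w x =>
    if (∀ ℓ : ℕ, ((G.adjMatrix ℝ) ^ ℓ) w x = ((G.adjMatrix ℝ) ^ ℓ) u v) then 1 else 0

/-- Every quotient-polynomial graph is walk-regular: the class `J_0` of the
diagonal pair `(u,u)` is exactly the diagonal, i.e. `J_0 = I` (equivalently, `(A^ℓ)_{uu}`
does not depend on the vertex `u`, for every `ℓ`). -/
theorem stmt9 {V : Type*} [Fintype V] [DecidableEq V] [Nonempty V] (G : SimpleGraph V)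
    [DecidableRel G.Adj]
    (hqp : ∀ u v : V, ∃ p : Polynomial ℝ,
      Polynomial.aeval (G.adjMatrix ℝ) p = walkClassMatrix G u v) :
    ∀ u : V, walkClassMatrix G u u = (1 : Matrix V V ℝ) := by
  intro u
  set A := G.adjMatrix ℝ with hA
  -- entries of any polynomial in A are linear combinations of walk counts
  have haeval : ∀ (p : Polynomial ℝ) (w x : V),
      (Polynomial.aeval A p) w x
        = ∑ i ∈ Finset.range (p.natDegree + 1), p.coeff i * ((A ^ i) w x) := by
    intro p w x
    rw [Polynomial.aeval_eq_sum_range]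
    rw [Matrix.sum_apply]
    refine Finset.sum_congr rfl fun i _ => ?_
    simp [Matrix.smul_apply]
  -- "connectivity": for every v there is a walk from u to v
  have hconn : ∀ v : V, ∃ ℓ : ℕ, (A ^ ℓ) u v ≠ 0 := by
    intro v
    by_contra h
    push_neg at h
    obtain ⟨p, hp⟩ := hqp u v
    have h1 : walkClassMatrix G u v u v = 1 := by
      simp [walkClassMatrix]
    have h0 : (Polynomial.aeval A p) u v = 0 := by
      rw [haeval]
      refine Finset.sum_eq_zero fun i _ => ?_
      rw [h i, mul_zero]
    rw [hp, h1] at h0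
    exact one_ne_zero h0
  set J := walkClassMatrix G u u with hJ
  -- off-diagonal entries of J are zero
  have hoff : ∀ w x : V, w ≠ x → J w x = 0 := by
    intro w x hwx
    rw [hJ]
    simp only [walkClassMatrix, Matrix.of_apply, ite_eq_right_iff]
    intro h
    have h0 := h 0
    simp only [pow_zero, Matrix.one_apply, if_neg hwx, if_pos rfl] at h0
    exact absurd h0 zero_ne_one
  have hJuu : J u u = 1 := by simp [hJ, walkClassMatrix]
  -- J commutes with powers of A
  obtain ⟨p, hp⟩ := hqp u u
  have hcomm : ∀ ℓ : ℕ, J * A ^ ℓ = A ^ ℓ * J := by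
    intro ℓ
    rw [hJ, ← hp]
    have : Commute (Polynomial.aeval A p) A := by
      simpa using (Commute.all p (Polynomial.X : Polynomial ℝ)).map (Polynomial.aeval A)
    exact (this.pow_right ℓ).eq
  -- diagonal entries of J are one
  have hdiag : ∀ v : V, J v v = 1 := by
    intro v
    obtain ⟨ℓ, hℓ⟩ := hconn v
    have h1 : (J * A ^ ℓ) u v = (A ^ ℓ) u v := by
      rw [Matrix.mul_apply]
      rw [Finset.sum_eq_single u]
      · rw [hJuu, one_mul]
      · intro w _ hw
        rw [hoff u w (Ne.symm hw), zero_mul]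
      · intro h; exact absurd (Finset.mem_univ u) h
    have h2 : (A ^ ℓ * J) u v = (A ^ ℓ) u v * J v v := by
      rw [Matrix.mul_apply]
      rw [Finset.sum_eq_single v]
      · intro w _ hw
        rw [hoff w v hw, mul_zero]
      · intro h; exact absurd (Finset.mem_univ v) h
    rw [hcomm ℓ, h2] at h1
    have := mul_left_cancel₀ hℓ (h1.trans (mul_one _).symm)
    exact this
  -- conclude J = I
  ext w x
  by_cases h : w = x
  · subst h
    rw [hdiag, Matrix.one_apply_eq]
  · rw [hoff w x h, Matrix.one_apply_ne h]
end

section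
/- A distance-polynomial graph with diameter D and d+1 distinct eigenvalues is distance-regular if and only if D = d. -/
open scoped Classical

/-- A graph is distance-regular if the intersection numbers
`b_i = |Γ(v) ∩ Γ_{i+1}(u)|` and `c_i = |Γ(v) ∩ Γ_{i-1}(u)|` depend only on
`i = dist(u,v)`. -/
def IsDistanceRegular {V : Type*} [Fintype V] (G : SimpleGraph V) : Prop :=
  ∀ i : ℕ, ∃ b c : ℕ, ∀ u v : V, G.dist u v = i →
    (Finset.univ.filter (fun w => G.Adj v w ∧ G.dist u w = i + 1)).card = b ∧
    (Finset.univ.filter (fun w => G.Adj v w ∧ G.dist u w = i - 1)).card = c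

/-! Let `𝒜 = ℝ[A]` be the adjacency algebra and `𝒟` the span of the distance matrices
`A_i`. Then `dim 𝒜 = d + 1` is the degree of the minimal polynomial of `A`, and `𝒟` is the space
of matrices whose `(u, v)` entry depends only on `dist u v`; the `A_i` with `i ≤ D` are linearly
independent, so `dim 𝒟 = D + 1`. Distance-polynomiality says `𝒟 ≤ 𝒜`, whence `D ≤ d`.
The `(u, v)` entry of `A_j * A` counts the neighbours of `v` at distance `j` from `u`, so `Γ` is
distance-regular iff every `A_j * A` lies in `𝒟`. If so, `𝒟` contains `1 = A_0` and is closed under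
right multiplication by `A`, so `𝒜 ≤ 𝒟` and `d ≤ D`. Conversely, if `D = d` then `𝒟 = 𝒜` by
dimension, and `𝒜` is closed under multiplication. -/

open Finset Polynomial Module SimpleGraph

theorem Algebra.finrank_adjoin_singleton_eq_natDegree_minpoly {K B : Type*} [Field K] [Ring B]
    [Algebra K B] (x : B) :
    finrank K (Algebra.adjoin K {x}) = (minpoly K x).natDegree := by
  have hker : RingHom.ker (aeval x).rangeRestrict = Ideal.span {minpoly K x} := by
    rw [AlgHom.ker_rangeRestrict, minpoly.ker_aeval_eq_span_minpoly, Ideal.span]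
  rw [Algebra.adjoin_singleton_eq_range_aeval, ← (Ideal.quotientKerAlgEquivOfSurjective
    (aeval x).rangeRestrict_surjective).toLinearEquiv.finrank_eq,
    (Ideal.quotientEquivAlgOfEq K hker).toLinearEquiv.finrank_eq]
  exact finrank_quotient_span_eq_natDegree

namespace SimpleGraph

variable {V : Type*}

lemma Reachable.exists_dist_eq_of_le {G : SimpleGraph V} {u v : V} (h : G.Reachable u v)
    {i : ℕ} (hi : i ≤ G.dist u v) : ∃ w, G.dist u w = i := by
  obtain ⟨p, hp⟩ := h.exists_walk_length_eq_dist
  refine ⟨p.getVert i, le_antisymm ?_ ?_⟩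
  · simpa [hp, hi] using dist_le (p.take i)
  · have hdrop := dist_le (p.drop i)
    have htri := (p.take i).reachable.dist_triangle_left v
    rw [Walk.drop_length] at hdrop
    omega

variable (G : SimpleGraph V)

def IsDistanceConstant {α : Type*} (M : Matrix V V α) : Prop :=
  ∀ u v u' v', G.dist u v = G.dist u' v' → M u v = M u' v'

variable {G} in
lemma IsDistanceConstant.map {α β : Type*} {M : Matrix V V α} (hM : G.IsDistanceConstant M)
    (f : α → β) : G.IsDistanceConstant (M.map f) :=
  fun u v u' v' h => congrArg f (hM u v u' v' h)

variable {G} in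
lemma IsDistanceConstant.of_map {α β : Type*} {M : Matrix V V α} {f : α → β}
    (hf : Function.Injective f) (hM : G.IsDistanceConstant (M.map f)) :
    G.IsDistanceConstant M :=
  fun u v u' v' h => hf (hM u v u' v' h)

section Counting

variable [Fintype V]

noncomputable def adjDistCount (j : ℕ) : Matrix V V ℕ :=
  Matrix.of fun u v => #{w | G.Adj v w ∧ G.dist u w = j}

lemma adjDistCount_apply (j : ℕ) (u v : V) :
    G.adjDistCount j u v = #{w | G.Adj v w ∧ G.dist u w = j} := rfl

lemma adjDistCount_eq_zero {j : ℕ} {u v : V}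
    (h : j + 1 < G.dist u v ∨ G.dist u v + 1 < j) : G.adjDistCount j u v = 0 := by
  refine card_eq_zero.2 (filter_eq_empty_iff.2 fun w _ ⟨hadj, hw⟩ => ?_)
  have := hadj.diff_dist_adj (u := u)
  omega

lemma adjDistCount_zero_self (v : V) : G.adjDistCount 0 v v = 0 := by
  refine card_eq_zero.2 (filter_eq_empty_iff.2 fun w _ ⟨hadj, hw⟩ => ?_)
  rw [hadj.reachable.dist_eq_zero_iff] at hw
  exact hadj.ne hw

lemma card_adj_eq_adjDistCount_add {u v : V} {m : ℕ} (hm : G.dist u v = m) (h : 0 < m) :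
    #{w | G.Adj v w} =
      G.adjDistCount (m - 1) u v + G.adjDistCount m u v + G.adjDistCount (m + 1) u v := by
  have hsplit : ({w | G.Adj v w} : Finset V) =
      ({w | G.Adj v w ∧ G.dist u w = m - 1} : Finset V) ∪
        ({w | G.Adj v w ∧ G.dist u w = m} : Finset V) ∪
        ({w | G.Adj v w ∧ G.dist u w = m + 1} : Finset V) := by
    ext w
    simp only [mem_filter, mem_univ, true_and, mem_union]
    constructor
    · intro hadj
      simp only [hadj, true_and]
      have := hadj.diff_dist_adj (u := u)
      omega
    · tauto
  rw [hsplit, card_union_of_disjoint, card_union_of_disjoint]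
  · rfl
  · exact disjoint_filter.2 fun w _ hw hw' => by omega
  · refine Finset.disjoint_left.2 fun w hw hw' => ?_
    simp only [mem_union, mem_filter] at hw hw'
    omega

end Counting

end SimpleGraph

namespace IsDistanceRegular

variable {V : Type*} [Fintype V] {G : SimpleGraph V}

lemma exists_card_adj_eq (hreg : IsDistanceRegular G) : ∃ k, ∀ v, #{w | G.Adj v w} = k := by
  obtain ⟨k, _, hk⟩ := hreg 0
  refine ⟨k, fun v => ?_⟩
  have hv := (hk v v G.dist_self).1
  simpa only [zero_add, dist_eq_one_iff_adj, and_self] using hv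

lemma isDistanceConstant_adjDistCount (hreg : IsDistanceRegular G) (hconn : G.Connected)
    (j : ℕ) : G.IsDistanceConstant (G.adjDistCount j) := by
  obtain ⟨k, hk⟩ := hreg.exists_card_adj_eq
  intro u v u' v' huv
  obtain ⟨m, hm, hm'⟩ : ∃ m, G.dist u v = m ∧ G.dist u' v' = m := ⟨_, rfl, huv.symm⟩
  obtain ⟨b, c, hbc⟩ := hreg m
  obtain ⟨hb, hc⟩ := hbc u v hm
  obtain ⟨hb', hc'⟩ := hbc u' v' hm'
  simp only [← adjDistCount_apply] at hb hc hb' hc'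
  rcases (by omega : j = m + 1 ∨ j + 1 = m ∨ j = m ∨ j + 1 < m ∨ m + 1 < j)
    with rfl | rfl | rfl | hj
  · exact hb.trans hb'.symm
  · exact hc.trans hc'.symm
  · rcases Nat.eq_zero_or_pos j with rfl | hpos
    · rw [hconn.dist_eq_zero_iff] at hm hm'
      rw [hm, hm', adjDistCount_zero_self, adjDistCount_zero_self]
    · -- by regularity, the neighbours at distance `j` are those counted neither by `b` nor by `c`
      have h := G.card_adj_eq_adjDistCount_add hm hpos
      have h' := G.card_adj_eq_adjDistCount_add hm' hpos
      rw [hk] at h h'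
      omega
  · rw [G.adjDistCount_eq_zero (hm ▸ hj), G.adjDistCount_eq_zero (hm' ▸ hj)]

end IsDistanceRegular

namespace SimpleGraph

variable {V : Type*} (G : SimpleGraph V)

lemma isDistanceRegular_of_isDistanceConstant_adjDistCount [Fintype V]
    (h : ∀ j, G.IsDistanceConstant (G.adjDistCount j)) : IsDistanceRegular G := by
  intro i
  by_cases hi : ∃ u v, G.dist u v = i
  · obtain ⟨u₀, v₀, h₀⟩ := hi
    exact ⟨G.adjDistCount (i + 1) u₀ v₀, G.adjDistCount (i - 1) u₀ v₀, fun u v huv =>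
      ⟨h _ u v u₀ v₀ (huv.trans h₀.symm), h _ u v u₀ v₀ (huv.trans h₀.symm)⟩⟩
  · simp only [not_exists] at hi
    exact ⟨0, 0, fun u v huv => absurd huv (hi u v)⟩

lemma isDistanceRegular_iff_isDistanceConstant_adjDistCount [Fintype V] (hconn : G.Connected) :
    IsDistanceRegular G ↔ ∀ j, G.IsDistanceConstant (G.adjDistCount j) :=
  ⟨fun hreg => hreg.isDistanceConstant_adjDistCount hconn,
    G.isDistanceRegular_of_isDistanceConstant_adjDistCount⟩

noncomputable def distMatrix (R : Type*) [Zero R] [One R] (i : ℕ) : Matrix V V R :=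
  Matrix.of fun v w => if G.dist v w = i then 1 else 0

lemma distMatrix_apply (R : Type*) [Zero R] [One R] (i : ℕ) (v w : V) :
    G.distMatrix R i v w = if G.dist v w = i then 1 else 0 := rfl

lemma distMatrix_zero (R : Type*) [Zero R] [One R] [DecidableEq V] (hconn : G.Connected) :
    G.distMatrix R 0 = 1 := by
  ext v w
  simp [distMatrix_apply, Matrix.one_apply, hconn.dist_eq_zero_iff]

lemma distMatrix_eq_zero_of_lt (R : Type*) [Zero R] [One R] {D i : ℕ}
    (hD : ∀ v w : V, G.dist v w ≤ D) (hi : D < i) : G.distMatrix R i = 0 := by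
  ext v w
  have := hD v w
  simp [distMatrix_apply, show G.dist v w ≠ i by omega]

lemma distMatrix_mul_adjMatrix (R : Type*) [NonAssocSemiring R] [Fintype V] [DecidableRel G.Adj]
    (j : ℕ) : G.distMatrix R j * G.adjMatrix R = (G.adjDistCount j).map (↑) := by
  ext u v
  simp only [Matrix.mul_apply, distMatrix_apply, adjMatrix_apply, Matrix.map_apply,
    adjDistCount_apply, card_filter, Nat.cast_sum]
  refine sum_congr rfl fun w _ => ?_
  by_cases h₁ : G.dist u w = j <;> by_cases h₂ : G.Adj v w <;> simp [h₁, h₂, G.adj_comm w v]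

section Span

variable (K : Type*) [Field K]

def distSpan : Submodule K (Matrix V V K) :=
  Submodule.span K (Set.range (G.distMatrix K))

lemma mem_distSpan_iff [Fintype V] {M : Matrix V V K} :
    M ∈ G.distSpan K ↔ G.IsDistanceConstant M := by
  constructor
  · intro hM
    induction hM using Submodule.span_induction with
    | mem _ hx =>
      obtain ⟨i, rfl⟩ := hx
      intro u v u' v' h
      simp [distMatrix_apply, h]
    | zero => exact fun _ _ _ _ _ => rfl
    | add _ _ _ _ hx hy =>
      exact fun u v u' v' h => by simp only [Matrix.add_apply, hx u v u' v' h, hy u v u' v' h]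
    | smul _ _ _ hx =>
      exact fun u v u' v' h => by simp only [Matrix.smul_apply, hx u v u' v' h]
  · intro hM
    set f : ℕ → K := Function.extend (fun p : V × V => G.dist p.1 p.2) (fun p => M p.1 p.2) 0
    have hf : ∀ u v, f (G.dist u v) = M u v := fun u v =>
      Function.FactorsThrough.extend_apply (fun p q h => hM p.1 p.2 q.1 q.2 h) _ (u, v)
    have hMS : M = ∑ i ∈ univ.image fun p : V × V => G.dist p.1 p.2, f i • G.distMatrix K i := by
      ext u v
      rw [Matrix.sum_apply, sum_eq_single_of_mem _ (mem_image_of_mem _ (mem_univ (u, v)))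
        fun i _ hi => by simp [distMatrix_apply, Ne.symm hi]]
      simp [distMatrix_apply, hf]
    rw [hMS]
    exact Submodule.sum_mem _ fun i _ =>
      Submodule.smul_mem _ _ (Submodule.subset_span ⟨i, rfl⟩)

lemma linearIndependent_distMatrix {D : ℕ} (hatt : ∀ i ≤ D, ∃ u v : V, G.dist u v = i) :
    LinearIndependent K fun i : Fin (D + 1) => G.distMatrix K i := by
  rw [Fintype.linearIndependent_iff]
  intro g hg i
  obtain ⟨u, v, huv⟩ := hatt i (Nat.lt_succ_iff.1 i.2)
  have := congrFun (congrFun hg u) v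
  rw [Matrix.sum_apply, Fintype.sum_eq_single i fun j hj => by
    simp [distMatrix_apply, huv, Fin.val_ne_of_ne hj.symm]] at this
  simpa [distMatrix_apply, huv] using this

lemma finrank_distSpan [Fintype V] (hconn : G.Connected) {D : ℕ}
    (hD : ∀ v w : V, G.dist v w ≤ D) (hDatt : ∃ v w : V, G.dist v w = D) :
    finrank K (G.distSpan K) = D + 1 := by
  have hspan : G.distSpan K =
      Submodule.span K (Set.range fun i : Fin (D + 1) => G.distMatrix K i) := by
    refine le_antisymm (Submodule.span_le.2 ?_) (Submodule.span_mono ?_)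
    · rintro _ ⟨i, rfl⟩
      rcases le_or_gt i D with hi | hi
      · exact Submodule.subset_span ⟨⟨i, Nat.lt_succ_of_le hi⟩, rfl⟩
      · rw [G.distMatrix_eq_zero_of_lt K hD hi]
        exact zero_mem _
    · rintro _ ⟨i, rfl⟩
      exact ⟨i, rfl⟩
  obtain ⟨v, w, hvw⟩ := hDatt
  have hatt : ∀ i ≤ D, ∃ u v : V, G.dist u v = i := fun i hi =>
    ⟨v, (hconn v w).exists_dist_eq_of_le (hvw ▸ hi)⟩
  rw [hspan, finrank_span_eq_card (G.linearIndependent_distMatrix K hatt), Fintype.card_fin]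

variable [Fintype V] [DecidableEq V] [DecidableRel G.Adj]

lemma distSpan_le_adjoin_adjMatrix {D : ℕ} (hD : ∀ v w : V, G.dist v w ≤ D)
    (hpoly : ∀ i ≤ D, ∃ p : K[X], aeval (G.adjMatrix K) p = G.distMatrix K i) :
    G.distSpan K ≤ Subalgebra.toSubmodule (Algebra.adjoin K {G.adjMatrix K}) := by
  refine Submodule.span_le.2 ?_
  rintro _ ⟨i, rfl⟩
  rcases le_or_gt i D with hi | hi
  · obtain ⟨p, hp⟩ := hpoly i hi
    rw [← hp]
    exact aeval_mem_adjoin_singleton K _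
  · rw [G.distMatrix_eq_zero_of_lt K hD hi]
    exact zero_mem _

lemma adjoin_adjMatrix_le_distSpan (hconn : G.Connected)
    (h : ∀ j, G.IsDistanceConstant (G.adjDistCount j)) :
    Subalgebra.toSubmodule (Algebra.adjoin K {G.adjMatrix K}) ≤ G.distSpan K := by
  have hmul : G.distSpan K ≤ (G.distSpan K).comap (LinearMap.mulRight K (G.adjMatrix K)) := by
    refine Submodule.span_le.2 ?_
    rintro _ ⟨j, rfl⟩
    simpa [mem_distSpan_iff, distMatrix_mul_adjMatrix] using (h j).map ((↑) : ℕ → K)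
  rw [Algebra.adjoin_eq_span, ← Submonoid.powers_eq_closure, Submodule.span_le]
  rintro _ ⟨n, rfl⟩
  dsimp only
  induction n with
  | zero =>
    rw [pow_zero, ← G.distMatrix_zero K hconn]
    exact Submodule.subset_span ⟨0, rfl⟩
  | succ n ih => simpa [pow_succ] using hmul ih

lemma isDistanceConstant_adjDistCount_of_distSpan_eq [CharZero K]
    (h : G.distSpan K = Subalgebra.toSubmodule (Algebra.adjoin K {G.adjMatrix K})) (j : ℕ) :
    G.IsDistanceConstant (G.adjDistCount j) := by
  have hmem : G.distMatrix K j * G.adjMatrix K ∈ G.distSpan K := by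
    have hj : G.distMatrix K j ∈ G.distSpan K := Submodule.subset_span ⟨j, rfl⟩
    rw [h, Subalgebra.mem_toSubmodule] at hj ⊢
    exact mul_mem hj (Algebra.self_mem_adjoin_singleton K _)
  rw [mem_distSpan_iff, distMatrix_mul_adjMatrix] at hmem
  exact hmem.of_map Nat.cast_injective

end Span

end SimpleGraph

theorem stmt12_general {V : Type*} [Fintype V] [DecidableEq V] (G : SimpleGraph V)
    [DecidableRel G.Adj] (hconn : G.Connected) (d D : ℕ)
    (hd : (minpoly ℝ (G.adjMatrix ℝ)).natDegree = d + 1)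
    (hDub : ∀ v w : V, G.dist v w ≤ D)
    (hDattained : ∃ v w : V, G.dist v w = D)
    (hdp : ∀ i : ℕ, i ≤ D → ∃ p : Polynomial ℝ,
      Polynomial.aeval (G.adjMatrix ℝ) p =
        Matrix.of (fun v w => if G.dist v w = i then (1 : ℝ) else 0)) :
    IsDistanceRegular G ↔ D = d := by
  let 𝒜 := Subalgebra.toSubmodule (Algebra.adjoin ℝ {G.adjMatrix ℝ})
  have hfin𝒜 : finrank ℝ 𝒜 = d + 1 :=
    (Subalgebra.finrank_toSubmodule _).trans
      ((Algebra.finrank_adjoin_singleton_eq_natDegree_minpoly _).trans hd)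
  have hfin𝒟 : finrank ℝ (G.distSpan ℝ) = D + 1 := G.finrank_distSpan ℝ hconn hDub hDattained
  have h𝒟𝒜 : G.distSpan ℝ ≤ 𝒜 := G.distSpan_le_adjoin_adjMatrix ℝ hDub hdp
  rw [G.isDistanceRegular_iff_isDistanceConstant_adjDistCount hconn]
  constructor
  · intro h
    have h𝒜𝒟 : 𝒜 ≤ G.distSpan ℝ := G.adjoin_adjMatrix_le_distSpan ℝ hconn h
    have := Submodule.finrank_mono h𝒜𝒟
    have := Submodule.finrank_mono h𝒟𝒜
    omega
  · rintro rfl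
    exact G.isDistanceConstant_adjDistCount_of_distSpan_eq ℝ
      (Submodule.eq_of_le_of_finrank_le h𝒟𝒜 (hfin𝒜.trans hfin𝒟.symm).le)

/-- A distance-polynomial graph with diameter `D` and `d + 1` distinct
eigenvalues is distance-regular iff `D = d`. -/
theorem stmt12 {V : Type*} [Fintype V] [DecidableEq V] [Nonempty V] (G : SimpleGraph V)
    [DecidableRel G.Adj] (hconn : G.Connected) (d D : ℕ)
    (hd : (minpoly ℝ (G.adjMatrix ℝ)).natDegree = d + 1)
    (hDub : ∀ v w : V, G.dist v w ≤ D)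
    (hDattained : ∃ v w : V, G.dist v w = D)
    (hdp : ∀ i : ℕ, i ≤ D → ∃ p : Polynomial ℝ,
      Polynomial.aeval (G.adjMatrix ℝ) p =
        Matrix.of (fun v w => if G.dist v w = i then (1 : ℝ) else 0)) :
    IsDistanceRegular G ↔ D = d :=
  stmt12_general G hconn d D hd hDub hDattained hdp
end

section
/- Every quotient-polynomial graph is distance-polynomial: for each i = 0,...,D the distance matrix A_i is a polynomial in A, obtained as A_i = Σ_{j : tr(A_i J_j) ≠ 0} q_j(A), where J_j = q_j(A) are the class matrices of the walk-regular partition. -/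
open scoped Classical

lemma entry_ne_zero_iff {V : Type*} [Fintype V] [DecidableEq V] (G : SimpleGraph V)
    [DecidableRel G.Adj] (n : ℕ) (v w : V) :
    ((G.adjMatrix ℝ) ^ n) v w ≠ 0 ↔ ∃ p : G.Walk v w, p.length = n := by
  rw [SimpleGraph.adjMatrix_pow_apply_eq_card_walk]
  simp only [ne_eq, Nat.cast_eq_zero, Fintype.card_eq_zero_iff]
  constructor
  · intro h
    simpa using not_isEmpty_iff.mp h
  · rintro ⟨p, hp⟩ h
    exact h.elim ⟨p, hp⟩

lemma dist_eq_of_walks {V : Type*} [Fintype V] [DecidableEq V] (G : SimpleGraph V)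
    [DecidableRel G.Adj] (hconn : G.Connected) (v w v' w' : V)
    (h : ∀ ℓ : ℕ, ((G.adjMatrix ℝ) ^ ℓ) v w = ((G.adjMatrix ℝ) ^ ℓ) v' w') :
    G.dist v w = G.dist v' w' := by
  have key : ∀ (a b a' b' : V), (∀ ℓ : ℕ, ((G.adjMatrix ℝ) ^ ℓ) a b = ((G.adjMatrix ℝ) ^ ℓ) a' b')
      → G.dist a b ≤ G.dist a' b' := by
    intro a b a' b' h
    obtain ⟨p, hp⟩ := hconn.exists_walk_length_eq_dist a' b'
    have : ((G.adjMatrix ℝ) ^ (G.dist a' b')) a b ≠ 0 := by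
      rw [h]
      exact (entry_ne_zero_iff G _ _ _).mpr ⟨p, hp⟩
    obtain ⟨p', hp'⟩ := (entry_ne_zero_iff G _ _ _).mp this
    exact hp' ▸ SimpleGraph.dist_le p'
  exact le_antisymm (key _ _ _ _ h) (key _ _ _ _ fun ℓ => (h ℓ).symm)

/-- Every quotient-polynomial graph is distance-polynomial: if the
walk-regular partition `{J_0,…,J_d}` of `V × V` has class matrices `J_j = q_j(A)`, then
for each `i = 0,…,D` the distance matrix `A_i` equals `p_i(A)` where
`p_i = Σ_{j : tr(A_i J_j) ≠ 0} q_j`. -/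
theorem stmt13 {V : Type*} [Fintype V] [DecidableEq V] (G : SimpleGraph V)
    [DecidableRel G.Adj] (hconn : G.Connected) (d D : ℕ)
    (hd : (minpoly ℝ (G.adjMatrix ℝ)).natDegree = d + 1)
    (hDub : ∀ v w : V, G.dist v w ≤ D)
    (hDattained : ∃ v w : V, G.dist v w = D)
    (J : Fin (d + 1) → Set (V × V))
    (hcover : ∀ q : V × V, ∃ i, q ∈ J i)
    (hdisj : ∀ i j, i ≠ j → Disjoint (J i) (J j))
    (hnonempty : ∀ i, (J i).Nonempty)
    (hclass : ∀ i, ∀ q ∈ J i, ∀ q' ∈ J i, ∀ ℓ : ℕ,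
      ((G.adjMatrix ℝ) ^ ℓ) q.1 q.2 = ((G.adjMatrix ℝ) ^ ℓ) q'.1 q'.2)
    (hsep : ∀ i j, ∀ q ∈ J i, ∀ q' ∈ J j,
      (∀ ℓ : ℕ, ((G.adjMatrix ℝ) ^ ℓ) q.1 q.2 = ((G.adjMatrix ℝ) ^ ℓ) q'.1 q'.2) → i = j)
    (q : Fin (d + 1) → Polynomial ℝ)
    (hq : ∀ j, Polynomial.aeval (G.adjMatrix ℝ) (q j) =
      Matrix.of (fun v w => if (v, w) ∈ J j then (1 : ℝ) else 0)) :
    ∀ i : ℕ, i ≤ D →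
      Matrix.of (fun v w => if G.dist v w = i then (1 : ℝ) else 0) =
        Polynomial.aeval (G.adjMatrix ℝ)
          (∑ j ∈ Finset.univ.filter (fun j : Fin (d + 1) =>
            (Matrix.of (fun v w => if G.dist v w = i then (1 : ℝ) else 0) *
              Matrix.of (fun v w => if (v, w) ∈ J j then (1 : ℝ) else 0)).trace ≠ 0),
            q j) := by
  intro i hi
  -- the class distance
  set dcl : Fin (d + 1) → ℕ := fun j => G.dist (hnonempty j).choose.1 (hnonempty j).choose.2
    with hdcl
  have distconst : ∀ j, ∀ p ∈ J j, G.dist p.1 p.2 = dcl j := by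
    intro j p hp
    exact dist_eq_of_walks G hconn _ _ _ _
      (hclass j p hp (hnonempty j).choose (hnonempty j).choose_spec)
  -- trace computation
  have htrace : ∀ j : Fin (d + 1),
      ((Matrix.of (fun v w => if G.dist v w = i then (1 : ℝ) else 0) *
        Matrix.of (fun v w => if (v, w) ∈ J j then (1 : ℝ) else 0)).trace ≠ 0) ↔ dcl j = i := by
    intro j
    have h1 : (Matrix.of (fun v w => if G.dist v w = i then (1 : ℝ) else 0) *
        Matrix.of (fun v w => if (v, w) ∈ J j then (1 : ℝ) else 0)).trace =
        ∑ p ∈ (Finset.univ ×ˢ Finset.univ : Finset (V × V)),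
          (if G.dist p.1 p.2 = i ∧ (p.2, p.1) ∈ J j then (1 : ℝ) else 0) := by
      rw [Finset.sum_product]
      simp only [Matrix.trace, Matrix.diag, Matrix.mul_apply, Matrix.of_apply, ite_and,
        ite_mul, one_mul, zero_mul]
    rw [h1]
    have h2 : (∑ p ∈ (Finset.univ ×ˢ Finset.univ : Finset (V × V)),
        (if G.dist p.1 p.2 = i ∧ (p.2, p.1) ∈ J j then (1 : ℝ) else 0)) = 0 ↔
        ∀ p ∈ (Finset.univ ×ˢ Finset.univ : Finset (V × V)),
          (if G.dist p.1 p.2 = i ∧ (p.2, p.1) ∈ J j then (1 : ℝ) else 0) = 0 := by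
      apply Finset.sum_eq_zero_iff_of_nonneg
      intro p _
      split <;> norm_num
    constructor
    · intro hne
      have h3 : ¬ ∀ p ∈ (Finset.univ ×ˢ Finset.univ : Finset (V × V)),
          (if G.dist p.1 p.2 = i ∧ (p.2, p.1) ∈ J j then (1 : ℝ) else 0) = 0 :=
        fun h => hne (h2.mpr h)
      push_neg at h3
      obtain ⟨p, _, hp⟩ := h3
      have hp' : G.dist p.1 p.2 = i ∧ (p.2, p.1) ∈ J j := by
        by_contra hc
        simp [hc] at hp
      have := distconst j (p.2, p.1) hp'.2
      rw [← this, SimpleGraph.dist_comm, hp'.1]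
    · intro hdi hc
      rw [h2] at hc
      have := hc ((hnonempty j).choose.2, (hnonempty j).choose.1) (by simp)
      rw [if_pos] at this
      · exact absurd this one_ne_zero
      constructor
      · rw [SimpleGraph.dist_comm]
        exact (distconst j _ (hnonempty j).choose_spec).trans hdi
      · exact (hnonempty j).choose_spec
  rw [map_sum]
  simp only [hq]
  rw [Finset.filter_congr (fun j _ => by rw [htrace j] : ∀ j ∈ Finset.univ,
    ((Matrix.of (fun v w => if G.dist v w = i then (1 : ℝ) else 0) *
      Matrix.of (fun v w => if (v, w) ∈ J j then (1 : ℝ) else 0)).trace ≠ 0) ↔ dcl j = i)]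
  ext v w
  simp only [Matrix.of_apply, Matrix.sum_apply]
  obtain ⟨j0, hj0⟩ := hcover (v, w)
  have hdj0 : dcl j0 = G.dist v w := (distconst j0 (v, w) hj0).symm
  by_cases hvw : G.dist v w = i
  · rw [if_pos hvw]
    have hmem : j0 ∈ Finset.univ.filter (fun j => dcl j = i) :=
      Finset.mem_filter.mpr ⟨Finset.mem_univ _, hdj0.trans hvw⟩
    have hsum : (∑ j ∈ Finset.univ.filter (fun j => dcl j = i),
        (if (v, w) ∈ J j then (1 : ℝ) else 0)) = 1 := by
      rw [Finset.sum_eq_single_of_mem j0 hmem]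
      · simp [hj0]
      · intro j hj hne
        have : (v, w) ∉ J j := fun hmm =>
          hne (hsep j j0 (v, w) hmm (v, w) hj0 fun ℓ => rfl)
        simp [this]
    rw [hsum]
  · rw [if_neg hvw]
    symm
    apply Finset.sum_eq_zero
    intro j hj
    have hdj : dcl j = i := (Finset.mem_filter.mp hj).2
    have : (v, w) ∉ J j := by
      intro hmem
      exact hvw ((distconst j (v, w) hmem).trans hdj)
    simp [this]
end

section
/- Every orbit polynomial graph is a quotient-polynomial graph: if the orbit matrices of Aut(Γ) acting on V×V all lie in the adjacency algebra, then the class matrices of the walk-regular partition of V×V also all lie in the adjacency algebra. -/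
open scoped Classical

private lemma walk_inv {V : Type*} [Fintype V] [DecidableEq V] (G : SimpleGraph V)
    [DecidableRel G.Adj] (σ : G ≃g G) :
    ∀ (ℓ : ℕ) (a b : V),
      ((G.adjMatrix ℝ) ^ ℓ) (σ a) (σ b) = ((G.adjMatrix ℝ) ^ ℓ) a b := by
  intro ℓ
  induction ℓ with
  | zero =>
    intro a b
    simp [Matrix.one_apply, EmbeddingLike.apply_eq_iff_eq]
  | succ n ih =>
    intro a b
    show (G.adjMatrix ℝ ^ n * G.adjMatrix ℝ) (σ a) (σ b) = (G.adjMatrix ℝ ^ n * G.adjMatrix ℝ) a b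
    simp only [Matrix.mul_apply]
    rw [← Equiv.sum_comp σ.toEquiv
      (fun y => ((G.adjMatrix ℝ) ^ n) (σ a) y * (G.adjMatrix ℝ) y (σ b))]
    refine Finset.sum_congr rfl fun z _ => ?_
    have h1 : ((G.adjMatrix ℝ) ^ n) (σ a) (σ.toEquiv z) = ((G.adjMatrix ℝ) ^ n) a z := ih a z
    have h2 : (G.adjMatrix ℝ) (σ.toEquiv z) (σ b) = (G.adjMatrix ℝ) z b := by
      rw [SimpleGraph.adjMatrix_apply, SimpleGraph.adjMatrix_apply]
      have hadj : G.Adj (σ.toEquiv z) (σ b) ↔ G.Adj z b := σ.map_adj_iff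
      by_cases h : G.Adj z b
      · rw [if_pos (hadj.mpr h), if_pos h]
      · rw [if_neg (fun hc => h (hadj.mp hc)), if_neg h]
    rw [h1, h2]

/-- Every orbit polynomial graph is a quotient-polynomial graph: if every
orbit matrix of `Aut(Γ)` acting on `V × V` lies in the adjacency algebra (is a polynomial
in `A`), then every class matrix of the walk-regular partition of `V × V` (classes of
pairs with identical walk vectors) also lies in the adjacency algebra. -/
theorem stmt14 {V : Type*} [Fintype V] [DecidableEq V] (G : SimpleGraph V)
    [DecidableRel G.Adj]
    (horb : ∀ u v : V, ∃ p : Polynomial ℝ,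
      Polynomial.aeval (G.adjMatrix ℝ) p =
        Matrix.of (fun w x => if (∃ σ : G ≃g G, σ u = w ∧ σ v = x) then (1 : ℝ) else 0)) :
    ∀ u v : V, ∃ p : Polynomial ℝ,
      Polynomial.aeval (G.adjMatrix ℝ) p =
        Matrix.of (fun w x =>
          if (∀ ℓ : ℕ, ((G.adjMatrix ℝ) ^ ℓ) w x = ((G.adjMatrix ℝ) ^ ℓ) u v)
          then (1 : ℝ) else 0) := by
  intro u v
  classical
  -- the orbit relation on V × V
  have hrefl : ∀ p : V × V, ∃ σ : G ≃g G, σ p.1 = p.1 ∧ σ p.2 = p.2 :=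
    fun p => ⟨RelIso.refl _, rfl, rfl⟩
  have hsymm : ∀ p q : V × V, (∃ σ : G ≃g G, σ p.1 = q.1 ∧ σ p.2 = q.2) →
      (∃ σ : G ≃g G, σ q.1 = p.1 ∧ σ q.2 = p.2) := by
    rintro p q ⟨σ, h1, h2⟩
    exact ⟨σ.symm, by rw [← h1]; exact σ.symm_apply_apply p.1,
      by rw [← h2]; exact σ.symm_apply_apply p.2⟩
  have htrans : ∀ p q s : V × V, (∃ σ : G ≃g G, σ p.1 = q.1 ∧ σ p.2 = q.2) →
      (∃ σ : G ≃g G, σ q.1 = s.1 ∧ σ q.2 = s.2) →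
      (∃ σ : G ≃g G, σ p.1 = s.1 ∧ σ p.2 = s.2) := by
    rintro p q s ⟨σ, h1, h2⟩ ⟨τ, h3, h4⟩
    exact ⟨σ.trans τ, by show τ (σ p.1) = s.1; rw [h1, h3],
      by show τ (σ p.2) = s.2; rw [h2, h4]⟩
  have hwalk : ∀ p q : V × V, (∃ σ : G ≃g G, σ p.1 = q.1 ∧ σ p.2 = q.2) →
      ∀ ℓ : ℕ, ((G.adjMatrix ℝ) ^ ℓ) q.1 q.2 = ((G.adjMatrix ℝ) ^ ℓ) p.1 p.2 := by
    rintro p q ⟨σ, h1, h2⟩ ℓ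
    rw [← h1, ← h2, walk_inv G σ]
  -- the walk-class of (u, v)
  set T : Finset (V × V) := Finset.univ.filter
    (fun q => ∀ ℓ : ℕ, ((G.adjMatrix ℝ) ^ ℓ) q.1 q.2 = ((G.adjMatrix ℝ) ^ ℓ) u v) with hT
  -- orbits
  set orb : V × V → Finset (V × V) := fun p => Finset.univ.filter
    (fun q => ∃ σ : G ≃g G, σ p.1 = q.1 ∧ σ p.2 = q.2) with horbdef
  have horbmem : ∀ p q : V × V, q ∈ orb p ↔ (∃ σ : G ≃g G, σ p.1 = q.1 ∧ σ p.2 = q.2) := by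
    intro p q; simp [horbdef]
  have horbcard_pos : ∀ p : V × V, 0 < (orb p).card :=
    fun p => Finset.card_pos.mpr ⟨p, (horbmem p p).mpr (hrefl p)⟩
  have horbeq : ∀ p q : V × V, (∃ σ : G ≃g G, σ p.1 = q.1 ∧ σ p.2 = q.2) → orb p = orb q := by
    intro p q h
    ext s
    rw [horbmem, horbmem]
    exact ⟨fun h2 => htrans _ _ _ (hsymm _ _ h) h2, fun h2 => htrans _ _ _ h h2⟩
  -- choose the polynomials for the orbit matrices
  choose pp hpp using horb
  refine ⟨∑ q ∈ T, ((orb q).card : ℝ)⁻¹ • pp q.1 q.2, ?_⟩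
  rw [map_sum]
  simp only [map_smul, hpp]
  ext w x
  simp only [Matrix.sum_apply, Matrix.smul_apply, Matrix.of_apply, smul_eq_mul]
  by_cases hwx : ∀ ℓ : ℕ, ((G.adjMatrix ℝ) ^ ℓ) w x = ((G.adjMatrix ℝ) ^ ℓ) u v
  · rw [if_pos hwx]
    have hwxT : (w, x) ∈ T := by
      rw [hT, Finset.mem_filter]
      exact ⟨Finset.mem_univ _, hwx⟩
    have hsub : orb (w, x) ⊆ T := by
      intro q hq
      rw [hT, Finset.mem_filter]
      refine ⟨Finset.mem_univ _, fun ℓ => ?_⟩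
      rw [hwalk (w, x) q ((horbmem _ _).mp hq) ℓ]
      exact hwx ℓ
    have key : ∀ q ∈ T,
        ((orb q).card : ℝ)⁻¹ * (if (∃ σ : G ≃g G, σ q.1 = w ∧ σ q.2 = x) then (1:ℝ) else 0)
        = if q ∈ orb (w, x) then ((orb (w, x)).card : ℝ)⁻¹ else 0 := by
      intro q _
      by_cases h : ∃ σ : G ≃g G, σ q.1 = w ∧ σ q.2 = x
      · rw [if_pos h, mul_one,
          if_pos ((horbmem _ _).mpr (hsymm q (w, x) h)), horbeq q (w, x) h]
      · rw [if_neg h, mul_zero,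
          if_neg (fun hc => h (hsymm (w, x) q ((horbmem _ _).mp hc)))]
    rw [Finset.sum_congr rfl key, Finset.sum_ite_mem,
      Finset.inter_eq_right.mpr hsub, Finset.sum_const, nsmul_eq_mul]
    rw [mul_inv_cancel₀]
    exact_mod_cast (horbcard_pos (w, x)).ne'
  · rw [if_neg hwx]
    refine Finset.sum_eq_zero fun q hq => ?_
    rw [if_neg, mul_zero]
    rintro hc
    apply hwx
    intro ℓ
    rw [hwalk q (w, x) hc ℓ]
    rw [hT, Finset.mem_filter] at hq
    exact hq.2 ℓ
end
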